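/- arXiv:2501.17424 — 2 statements merged into one kernel-verified Lean document; each statement's English description precedes it below -/
import Mathlib

section
/- (Safety Critic) Let s : ℕ → S be a trajectory and define the per-step reward r(k) = min(h(s(k+1)) + (α-1)·h(s(k)), 0) with 0 < α < 1 and 0 < γ < 1. If h(s(0)) ≥ 0 and the discounted return ∑_{k=0}^∞ γ^k · r(k) = 0 (with the series summable), then h(s(k)) ≥ 0 for all k, i.e., the trajectory remains in the safe set forever. -/
theorem stmt_4 {S : Type*} (h : S → ℝ) (α γ : ℝ) (hα0 : 0 < α) (hα1 : α < 1)
    (hγ0 : 0 < γ) (hγ1 : γ < 1) (s : ℕ → S)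
    (r : ℕ → ℝ) (hr : ∀ k, r k = min (h (s (k + 1)) + (α - 1) * h (s k)) 0)
    (h0 : h (s 0) ≥ 0)
    (hsum : Summable (fun k => γ ^ k * r k))
    (hzero : ∑' k, γ ^ k * r k = 0) : ∀ k, h (s k) ≥ 0 := by
  have hrle : ∀ k, r k ≤ 0 := fun k => (hr k) ▸ min_le_right _ 0
  have hg : Summable (fun k => -(γ ^ k * r k)) := hsum.neg
  have hgz : ∑' k, -(γ ^ k * r k) = 0 := by rw [tsum_neg, hzero, neg_zero]
  have hr0 : ∀ k, r k = 0 := by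
    intro k
    have hnn : ∀ i, 0 ≤ -(γ ^ i * r i) := fun i =>
      neg_nonneg.2 (mul_nonpos_of_nonneg_of_nonpos (pow_nonneg hγ0.le i) (hrle i))
    have := Summable.le_tsum hg k (fun i _ => hnn i)
    rw [hgz] at this
    have : γ ^ k * r k = 0 := le_antisymm
      (mul_nonpos_of_nonneg_of_nonpos (pow_nonneg hγ0.le k) (hrle k))
      (by linarith [this])
    have hγk : γ ^ k ≠ 0 := (pow_pos hγ0 k).ne'
    exact (mul_eq_zero.1 this).resolve_left hγk
  intro k
  induction k with
  | zero => exact h0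
  | succ n ih =>
    have := hr0 n
    rw [hr n] at this
    have hmin : 0 ≤ h (s (n + 1)) + (α - 1) * h (s n) := by
      by_contra hc
      push_neg at hc
      rw [min_eq_left hc.le] at this
      linarith
    nlinarith
end

section
/- If the finite discounted return of the exponentially normalized safety reward attains its maximum value, i.e., ∑_{k=0}^{k_max - 1} γ^k · exp(min(h(s(k+1)) + (α-1)·h(s(k)), 0)) = (1 - γ^{k_max})/(1 - γ) with 0 < γ < 1, then h(s(k+1)) + (α-1)·h(s(k)) ≥ 0 for all k < k_max; consequently, if additionally h(s(0)) ≥ 0 and 0 < α < 1, then h(s(k)) ≥ 0 for all k ≤ k_max. -/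
/-!
Each reward `exp (min x 0)` is at most `1`, so the discounted return is at most the geometric sum
`∑ γ ^ k = (1 - γ ^ kmax) / (1 - γ)`. Attaining that bound forces every reward to equal `1`, that is,
the discrete barrier condition `h (s (k + 1)) ≥ (1 - α) h (s k)` holds along the whole trajectory;
for `α < 1` it propagates `h (s 0) ≥ 0` forward step by step.
-/

open Finset

theorem Finset.eq_one_of_sum_mul_eq_sum {ι K : Type*} [Field K] [LinearOrder K]
    [IsStrictOrderedRing K] {t : Finset ι} {w x : ι → K} (hw : ∀ i ∈ t, 0 < w i)
    (hx : ∀ i ∈ t, x i ≤ 1) (hsum : ∑ i ∈ t, w i * x i = ∑ i ∈ t, w i) :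
    ∀ i ∈ t, x i = 1 := by
  have hle : ∀ i ∈ t, w i * x i ≤ w i := fun i hi =>
    mul_le_of_le_one_right (hw i hi).le (hx i hi)
  intro i hi
  have hi_eq := (sum_eq_sum_iff_of_le hle).mp hsum i hi
  exact (mul_eq_left₀ (hw i hi).ne').mp hi_eq

theorem geom_sum_range_eq_one_sub_div {K : Type*} [DivisionRing K] {x : K} (hx : x ≠ 1) (n : ℕ) :
    ∑ i ∈ range n, x ^ i = (1 - x ^ n) / (1 - x) := by
  rw [range_eq_Ico, geom_sum_Ico' hx (Nat.zero_le n), pow_zero]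

theorem Real.exp_min_zero_le_one (x : ℝ) : exp (min x 0) ≤ 1 :=
  exp_le_one_iff.mpr (min_le_right x 0)

theorem Real.exp_min_zero_eq_one_iff {x : ℝ} : exp (min x 0) = 1 ↔ 0 ≤ x := by
  rw [exp_eq_one_iff, min_eq_right_iff]

theorem nonneg_of_barrier_step {x : ℕ → ℝ} {α : ℝ} {n : ℕ} (hα : α ≤ 1) (h0 : 0 ≤ x 0)
    (hstep : ∀ k < n, 0 ≤ x (k + 1) + (α - 1) * x k) : ∀ k ≤ n, 0 ≤ x k := by
  intro k hk
  induction k with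
  | zero => exact h0
  | succ k ih =>
    have hk_nonneg := ih (Nat.le_of_succ_le hk)
    nlinarith [hstep k hk]

theorem stmt_7 {S : Type*} (h : S → ℝ) (α γ : ℝ) (hγ0 : 0 < γ) (hγ1 : γ < 1)
    (kmax : ℕ) (s : ℕ → S)
    (heq : (∑ k ∈ Finset.range kmax,
        γ ^ k * Real.exp (min (h (s (k + 1)) + (α - 1) * h (s k)) 0))
      = (1 - γ ^ kmax) / (1 - γ)) :
    (∀ k < kmax, h (s (k + 1)) + (α - 1) * h (s k) ≥ 0) ∧
    (h (s 0) ≥ 0 → 0 < α → α < 1 → ∀ k ≤ kmax, h (s k) ≥ 0) := by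
  rw [← geom_sum_range_eq_one_sub_div hγ1.ne] at heq
  have hreward : ∀ k ∈ range kmax,
      Real.exp (min (h (s (k + 1)) + (α - 1) * h (s k)) 0) = 1 :=
    eq_one_of_sum_mul_eq_sum (fun k _ => pow_pos hγ0 k)
      (fun k _ => Real.exp_min_zero_le_one _) heq
  have hbarrier : ∀ k < kmax, h (s (k + 1)) + (α - 1) * h (s k) ≥ 0 := fun k hk =>
    Real.exp_min_zero_eq_one_iff.mp (hreward k (mem_range.mpr hk))
  exact ⟨hbarrier, fun h0 _ hα1 => nonneg_of_barrier_step (x := h ∘ s) hα1.le h0 hbarrier⟩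
end
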